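/- Let μ ≥ 1, let L : ℂ^μ → ℂ^μ be a unitary linear map with L L̄ = L̄ L = id (where L̄ = J₀ L J₀ and J₀ is entrywise complex conjugation), and let ℓ : ℂ^μ → ℂ^μ be a linear map with ℓ† = ℓ, ℓ² = id, and L ℓ̄ = ℓ L (equivalently, the antiunitary map A(v) := L(v̄) commutes with ℓ). Then there exists an orthonormal basis {v_p}_{1 ≤ p ≤ μ} of ℂ^μ consisting of eigenvectors of ℓ such that v_p = L(v̄_p) for every p. -/

import Mathlib

/-!
The antiunitary involution `A v = L (conj v)` commutes with `ℓ`, and `ℓ` has real eigenvalues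
`±1`, so `A` preserves every space `V ∩ ker (ℓ ∓ 1)`. In a nonzero `A`-invariant subspace `A`
fixes a unit vector: `u + A u`, or `i u` when `A u = -u`, normalised by a real scalar. The
orthogonal complement of a subspace invariant under `A` and the self-adjoint `ℓ` is again
invariant, so a maximal orthonormal family of `A`-fixed `±1`-eigenvectors of `ℓ` has trivial
orthogonal complement and is a basis.
-/

/-- Entrywise complex conjugation `J₀` on `ℂ^μ`. -/
noncomputable def conjE {μ : ℕ} (v : EuclideanSpace ℂ (Fin μ)) : EuclideanSpace ℂ (Fin μ) :=
  WithLp.toLp 2 (fun p => star (v p))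

open scoped InnerProductSpace ComplexConjugate
open Submodule Module

section Orthonormal

variable {𝕜 E : Type*} [RCLike 𝕜] [NormedAddCommGroup E] [InnerProductSpace 𝕜 E]

theorem orthonormal_subtype_iff_pairwise {s : Set E} :
    Orthonormal 𝕜 ((↑) : s → E) ↔ (∀ v ∈ s, ‖v‖ = 1) ∧ s.Pairwise (fun v w => ⟪v, w⟫_𝕜 = 0) := by
  simp [Orthonormal, ← pairwise_subtype_iff_pairwise_set]

theorem Orthonormal.insert_of_mem_orthogonal {s : Set E} (hs : Orthonormal 𝕜 ((↑) : s → E))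
    {e : E} (he : ‖e‖ = 1) (hes : e ∈ (span 𝕜 s)ᗮ) : Orthonormal 𝕜 ((↑) : ↥(insert e s) → E) := by
  rw [orthonormal_subtype_iff_pairwise] at hs ⊢
  refine ⟨Set.forall_mem_insert.2 ⟨he, hs.1⟩, hs.2.insert fun v hv _ => ?_⟩
  have hve : ⟪v, e⟫_𝕜 = 0 := hes v (subset_span hv)
  exact ⟨inner_eq_zero_symm.1 hve, hve⟩

theorem exists_orthonormal_subset_orthogonal_eq_bot {S : Set E}
    (hS : ∀ s ⊆ S, Orthonormal 𝕜 ((↑) : s → E) → (span 𝕜 s)ᗮ ≠ ⊥ →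
      ∃ e ∈ S, ‖e‖ = 1 ∧ e ∈ (span 𝕜 s)ᗮ) :
    ∃ s ⊆ S, Orthonormal 𝕜 ((↑) : s → E) ∧ (span 𝕜 s)ᗮ = ⊥ := by
  obtain ⟨s, hs⟩ := zorn_subset {s | s ⊆ S ∧ Orthonormal 𝕜 ((↑) : s → E)} fun c hc hchain =>
    ⟨⋃₀ c, ⟨Set.sUnion_subset fun t ht => (hc ht).1,
      orthonormal_sUnion_of_directed hchain.directedOn fun t ht => (hc ht).2⟩,
      fun _ => Set.subset_sUnion_of_mem⟩
  obtain ⟨hsS, hon⟩ := hs.prop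
  refine ⟨s, hsS, hon, by_contra fun hne => ?_⟩
  obtain ⟨e, heS, he, hes⟩ := hS s hsS hon hne
  have hmem : e ∈ s :=
    hs.mem_of_prop_insert ⟨Set.insert_subset heS hsS, hon.insert_of_mem_orthogonal he hes⟩
  have : e = 0 := (span 𝕜 s).inf_orthogonal_eq_bot.le ⟨subset_span hmem, hes⟩
  simp [this] at he

end Orthonormal

theorem Module.End.exists_eigenspace_inf_ne_bot_of_involutive {R M : Type*} [CommRing R]
    [AddCommGroup M] [Module R M] (f : End R M) (hf : ∀ x, f (f x) = x) {V : Submodule R M}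
    (hV : V ∈ f.invtSubmodule) (hV0 : V ≠ ⊥) :
    ∃ ε : R, (ε = 1 ∨ ε = -1) ∧ V ⊓ f.eigenspace ε ≠ ⊥ := by
  obtain ⟨u, huV, hu⟩ := V.ne_bot_iff.1 hV0
  by_cases h : u + f u = 0
  · refine ⟨-1, Or.inr rfl, (V ⊓ _).ne_bot_iff.2 ⟨u, ⟨huV, ?_⟩, hu⟩⟩
    rw [SetLike.mem_coe, End.mem_eigenspace_iff, neg_one_smul]
    exact eq_neg_of_add_eq_zero_right h
  · refine ⟨1, Or.inl rfl, (V ⊓ _).ne_bot_iff.2 ⟨u + f u, ⟨V.add_mem huV (hV huV), ?_⟩, h⟩⟩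
    rw [SetLike.mem_coe, End.mem_eigenspace_iff, one_smul, map_add, hf, add_comm]

section Antiunitary

variable {E : Type*} [NormedAddCommGroup E] [InnerProductSpace ℂ E]

theorem exists_ne_zero_fixed_of_involutive (A : E →ₗ⋆[ℂ] E) (hA : ∀ x, A (A x) = x)
    {V : Submodule ℂ E} (hV : V ≤ V.comap A) (hV0 : V ≠ ⊥) : ∃ w ∈ V, w ≠ 0 ∧ A w = w := by
  obtain ⟨u, huV, hu⟩ := V.ne_bot_iff.1 hV0
  by_cases h : u + A u = 0
  · refine ⟨Complex.I • u, V.smul_mem _ huV, smul_ne_zero Complex.I_ne_zero hu, ?_⟩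
    rw [map_smulₛₗ, eq_neg_of_add_eq_zero_right h]
    simp
  · exact ⟨u + A u, V.add_mem huV (hV huV), h, by rw [map_add, hA, add_comm]⟩

theorem exists_norm_eq_one_fixed_of_involutive (A : E →ₗ⋆[ℂ] E) (hA : ∀ x, A (A x) = x)
    {V : Submodule ℂ E} (hV : V ≤ V.comap A) (hV0 : V ≠ ⊥) : ∃ v ∈ V, ‖v‖ = 1 ∧ A v = v := by
  obtain ⟨w, hwV, hw, hAw⟩ := exists_ne_zero_fixed_of_involutive A hA hV hV0
  refine ⟨(‖w‖⁻¹ : ℂ) • w, V.smul_mem _ hwV, norm_smul_inv_norm hw, ?_⟩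
  simp [hAw]

theorem orthogonal_le_comap_of_antiunitary (A : E →ₗ⋆[ℂ] E)
    (hA : ∀ x y, ⟪A x, A y⟫_ℂ = ⟪y, x⟫_ℂ) (hAA : ∀ x, A (A x) = x) {K : Submodule ℂ E}
    (hK : K ≤ K.comap A) : Kᗮ ≤ Kᗮ.comap A := by
  intro w hw k hk
  rw [← hAA k, hA]
  exact inner_eq_zero_symm.1 (hw _ (hK hk))

theorem eigenspace_le_comap_of_commute (A : E →ₗ⋆[ℂ] E) (ℓ : End ℂ E)
    (hAℓ : ∀ x, A (ℓ x) = ℓ (A x)) {ε : ℂ} (hε : conj ε = ε) :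
    ℓ.eigenspace ε ≤ (ℓ.eigenspace ε).comap A := by
  intro v hv
  rw [mem_comap, End.mem_eigenspace_iff] at *
  rw [← hAℓ, hv, map_smulₛₗ, hε]

theorem exists_norm_eq_one_signed_eigenvector_fixed (A : E →ₗ⋆[ℂ] E) (hAA : ∀ x, A (A x) = x)
    (ℓ : End ℂ E) (hℓℓ : ∀ x, ℓ (ℓ x) = x) (hAℓ : ∀ x, A (ℓ x) = ℓ (A x)) {V : Submodule ℂ E}
    (hVℓ : V ∈ ℓ.invtSubmodule) (hVA : V ≤ V.comap A) (hV0 : V ≠ ⊥) :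
    ∃ v ∈ V, ‖v‖ = 1 ∧ (ℓ v = v ∨ ℓ v = -v) ∧ A v = v := by
  obtain ⟨ε, hε, hne⟩ := End.exists_eigenspace_inf_ne_bot_of_involutive ℓ hℓℓ hVℓ hV0
  have hεA : ℓ.eigenspace ε ≤ (ℓ.eigenspace ε).comap A :=
    eigenspace_le_comap_of_commute A ℓ hAℓ (by rcases hε with rfl | rfl <;> simp)
  have hWA : V ⊓ ℓ.eigenspace ε ≤ (V ⊓ ℓ.eigenspace ε).comap A := by
    rw [comap_inf]
    exact inf_le_inf hVA hεA
  obtain ⟨v, hvW, hv1, hAv⟩ := exists_norm_eq_one_fixed_of_involutive A hAA hWA hne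
  obtain ⟨hvV, hvε⟩ := mem_inf.1 hvW
  rw [End.mem_eigenspace_iff] at hvε
  refine ⟨v, hvV, hv1, ?_, hAv⟩
  rcases hε with rfl | rfl <;> simp [hvε]

theorem exists_orthonormalBasis_signed_eigenvectors_fixed [FiniteDimensional ℂ E]
    (A : E →ₗ⋆[ℂ] E) (hA : ∀ x y, ⟪A x, A y⟫_ℂ = ⟪y, x⟫_ℂ) (hAA : ∀ x, A (A x) = x)
    (ℓ : End ℂ E) (hℓ : ℓ.IsSymmetric) (hℓℓ : ∀ x, ℓ (ℓ x) = x)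
    (hAℓ : ∀ x, A (ℓ x) = ℓ (A x)) :
    ∃ b : OrthonormalBasis (Fin (finrank ℂ E)) ℂ E,
      ∀ i, (ℓ (b i) = b i ∨ ℓ (b i) = -b i) ∧ A (b i) = b i := by
  obtain ⟨s, hsS, hs, hsp⟩ := exists_orthonormal_subset_orthogonal_eq_bot (𝕜 := ℂ)
    (S := {v : E | (ℓ v = v ∨ ℓ v = -v) ∧ A v = v}) fun s hsS _ hne => by
      have hℓs : span ℂ s ∈ ℓ.invtSubmodule := span_le.2 fun v hv => by
        rcases (hsS hv).1 with h | h <;> simpa [h] using subset_span hv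
      have hAs : span ℂ s ≤ (span ℂ s).comap A := span_le.2 fun v hv => by
        simp [(hsS hv).2, subset_span hv]
      obtain ⟨v, hv, hv1, hvS⟩ := exists_norm_eq_one_signed_eigenvector_fixed A hAA ℓ hℓℓ hAℓ
        (hℓ.orthogonalComplement_mem_invtSubmodule hℓs)
        (orthogonal_le_comap_of_antiunitary A hA hAA hAs) hne
      exact ⟨v, hvS, hv1, hv⟩
  have : Fintype s := hs.linearIndependent.setFinite.fintype
  let b := OrthonormalBasis.mkOfOrthogonalEqBot hs (by rwa [Subtype.range_coe])
  refine ⟨b.reindex (b.toBasis.indexEquiv (stdOrthonormalBasis ℂ E).toBasis), fun i => ?_⟩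
  rw [OrthonormalBasis.reindex_apply, OrthonormalBasis.coe_of_orthogonal_eq_bot_mk]
  exact hsS (Subtype.prop _)

end Antiunitary

theorem conjE_conjE {μ : ℕ} (v : EuclideanSpace ℂ (Fin μ)) : conjE (conjE v) = v := by
  ext p; simp [conjE]

theorem inner_conjE_conjE {μ : ℕ} (v w : EuclideanSpace ℂ (Fin μ)) :
    ⟪conjE v, conjE w⟫_ℂ = ⟪w, v⟫_ℂ := by
  simp [PiLp.inner_apply, conjE, mul_comm]

@[simps]
noncomputable def conjEₛₗ (μ : ℕ) :
    EuclideanSpace ℂ (Fin μ) →ₗ⋆[ℂ] EuclideanSpace ℂ (Fin μ) where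
  toFun := conjE
  map_add' v w := by ext p; simp [conjE]
  map_smul' c v := by ext p; simp [conjE]

theorem statement6_general (μ : ℕ)
    (L ℓ : EuclideanSpace ℂ (Fin μ) →ₗ[ℂ] EuclideanSpace ℂ (Fin μ))
    (hU1 : LinearMap.adjoint L ∘ₗ L = LinearMap.id)
    (h1 : ∀ v, L (conjE (L (conjE v))) = v)
    (hℓsa : LinearMap.adjoint ℓ = ℓ)
    (hℓsq : ℓ ∘ₗ ℓ = LinearMap.id)
    (hcomm : ∀ v, L (conjE (ℓ (conjE v))) = ℓ (L v)) :
    ∃ b : OrthonormalBasis (Fin μ) ℂ (EuclideanSpace ℂ (Fin μ)),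
      ∀ p, (ℓ (b p) = b p ∨ ℓ (b p) = -(b p)) ∧ b p = L (conjE (b p)) := by
  have hL : ∀ v w, ⟪L v, L w⟫_ℂ = ⟪v, w⟫_ℂ := fun v w => by
    rw [← LinearMap.adjoint_inner_right, ← LinearMap.comp_apply, hU1, LinearMap.id_apply]
  have hℓ : ℓ.IsSymmetric :=
    (ℓ.isSymmetric_iff_isSelfAdjoint).2 (LinearMap.isSelfAdjoint_iff'.2 hℓsa)
  obtain ⟨b, hb⟩ := exists_orthonormalBasis_signed_eigenvectors_fixed (L ∘ₛₗ conjEₛₗ μ)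
    (fun v w => (hL _ _).trans (inner_conjE_conjE v w)) h1 ℓ hℓ (LinearMap.congr_fun hℓsq)
    fun v => by simpa [conjE_conjE] using hcomm (conjE v)
  refine ⟨b.reindex (finCongr finrank_euclideanSpace_fin), fun p => ?_⟩
  rw [OrthonormalBasis.reindex_apply]
  exact ⟨(hb _).1, (hb _).2.symm⟩

/-- If `L` is unitary on `ℂ^μ` with `L L̄ = L̄ L = id`, and `ℓ` is a
self-adjoint involution with `L ℓ̄ = ℓ L`, then there is an orthonormal basis of eigenvectors
of `ℓ` (with eigenvalues `±1`) fixed by the antiunitary `v ↦ L(v̄)`. -/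
theorem statement6 (μ : ℕ) (hμ : 1 ≤ μ)
    (L ℓ : EuclideanSpace ℂ (Fin μ) →ₗ[ℂ] EuclideanSpace ℂ (Fin μ))
    (hU1 : LinearMap.adjoint L ∘ₗ L = LinearMap.id)
    (hU2 : L ∘ₗ LinearMap.adjoint L = LinearMap.id)
    (h1 : ∀ v, L (conjE (L (conjE v))) = v)
    (h2 : ∀ v, conjE (L (conjE (L v))) = v)
    (hℓsa : LinearMap.adjoint ℓ = ℓ)
    (hℓsq : ℓ ∘ₗ ℓ = LinearMap.id)
    (hcomm : ∀ v, L (conjE (ℓ (conjE v))) = ℓ (L v)) :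
    ∃ b : OrthonormalBasis (Fin μ) ℂ (EuclideanSpace ℂ (Fin μ)),
      ∀ p, (ℓ (b p) = b p ∨ ℓ (b p) = -(b p)) ∧ b p = L (conjE (b p)) :=
  statement6_general μ L ℓ hU1 h1 hℓsa hℓsq hcomm
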